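/- arXiv:1509.06034 — 5 statements merged into one kernel-verified Lean document; each statement's English description precedes it below -/
import Mathlib

section
/- Let G = (S, C, R) be a reaction network with a set of catalysts E ⊆ S (satisfying (C1) and (C2)) and let G* be the reduction of G by removal of E. Then G has no drainable siphons if and only if G* has no drainable siphons, and G has no self-replicable siphons if and only if G* has no self-replicable siphons. -/
/-- A reaction network: a finite set of species, a finite set of complexes
(nonnegative vectors supported on the species), and a finite set of reactions
(a digraph on the complexes with no self-loops), such that every complex takes
part in some reaction and every species is part of some complex. -/
structure RN (ι : Type) where
  species : Finset ι
  complexes : Finset (ι → ℝ)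
  reactions : Finset ((ι → ℝ) × (ι → ℝ))
  complexes_nonneg : ∀ y ∈ complexes, ∀ i, 0 ≤ y i
  complexes_supp : ∀ y ∈ complexes, ∀ i, y i ≠ 0 → i ∈ species
  react_mem_fst : ∀ r ∈ reactions, r.1 ∈ complexes
  react_mem_snd : ∀ r ∈ reactions, r.2 ∈ complexes
  no_loops : ∀ r ∈ reactions, r.1 ≠ r.2
  complexes_used : ∀ y ∈ complexes, ∃ r ∈ reactions, r.1 = y ∨ r.2 = y
  species_used : ∀ i ∈ species, ∃ y ∈ complexes, y i ≠ 0

namespace RN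

variable {ι : Type}

/-- A siphon: a nonempty set of species such that every reaction having a
product species in it also has a reactant species in it. -/
def IsSiphon (G : RN ι) (T : Set ι) : Prop :=
  T.Nonempty ∧ T ⊆ ↑G.species ∧
    ∀ r ∈ G.reactions, (∃ i ∈ T, 0 < r.2 i) → ∃ i ∈ T, 0 < r.1 i

/-- A minimal siphon: a siphon not properly containing any other siphon. -/
def MinimalSiphon (G : RN ι) (T : Set ι) : Prop :=
  G.IsSiphon T ∧ ∀ T' : Set ι, G.IsSiphon T' → T' ⊆ T → T' = T

/-- A nonempty set of species is drainable if some finite sequence of reactions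
(with repetitions allowed) strictly decreases every one of its coordinates. -/
def Drainable (G : RN ι) (T : Set ι) : Prop :=
  T.Nonempty ∧ T ⊆ ↑G.species ∧
    ∃ L : List ((ι → ℝ) × (ι → ℝ)), (∀ r ∈ L, r ∈ G.reactions) ∧
      ∀ i ∈ T, (L.map (fun r => r.2 i - r.1 i)).sum < 0

/-- A nonempty set of species is self-replicable if some finite sequence of
reactions (with repetitions allowed) strictly increases every one of its
coordinates. -/
def SelfReplicable (G : RN ι) (T : Set ι) : Prop :=
  T.Nonempty ∧ T ⊆ ↑G.species ∧
    ∃ L : List ((ι → ℝ) × (ι → ℝ)), (∀ r ∈ L, r ∈ G.reactions) ∧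
      ∀ i ∈ T, 0 < (L.map (fun r => r.2 i - r.1 i)).sum

/-- A P-semiflow: a nonzero nonnegative vector supported on the species with
ωᵀN = 0, i.e. ω · (y' - y) = 0 for every reaction y → y'. -/
def IsPSemiflow (G : RN ι) (ω : ι → ℝ) : Prop :=
  (∀ i, 0 ≤ ω i) ∧ (∀ i, ω i ≠ 0 → i ∈ G.species) ∧ ω ≠ 0 ∧
    ∀ r ∈ G.reactions, ∑ i ∈ G.species, ω i * (r.2 i - r.1 i) = 0

/-- The siphon/P-semiflow property: every siphon contains the support of a
P-semiflow. -/
def SiphonPSemiflowProperty (G : RN ι) : Prop :=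
  ∀ T : Set ι, G.IsSiphon T → ∃ ω : ι → ℝ, G.IsPSemiflow ω ∧ {i | 0 < ω i} ⊆ T

/-- Consistency: there is a strictly positive T-semiflow, i.e. strictly
positive reaction weights v with N v = 0. -/
def Consistent (G : RN ι) : Prop :=
  ∃ v : ((ι → ℝ) × (ι → ℝ)) → ℝ, (∀ r ∈ G.reactions, 0 < v r) ∧
    ∀ i : ι, ∑ r ∈ G.reactions, v r * (r.2 i - r.1 i) = 0

/-- Conservativity: there is a strictly positive conservation law ω ≫ 0 with
ωᵀN = 0. -/
def Conservative (G : RN ι) : Prop :=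
  ∃ ω : ι → ℝ, (∀ i ∈ G.species, 0 < ω i) ∧
    ∀ r ∈ G.reactions, ∑ i ∈ G.species, ω i * (r.2 i - r.1 i) = 0

/-- A directed reaction path from `y` to `y'` all of whose non-endpoint
complexes lie in the set `A`. -/
def PathThrough (G : RN ι) (A : Set (ι → ℝ)) (y y' : ι → ℝ) : Prop :=
  ∃ L : List (ι → ℝ), (∀ z ∈ L, z ∈ A) ∧
    List.Chain (fun a b => (a, b) ∈ G.reactions) y (L ++ [y'])

end RN

variable {ι : Type}

/-- The complex consisting of the single species `j` (with unit coefficient),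
for `j` in the given set. -/
def InterCplx [DecidableEq ι] (Y : Finset ι) (z : ι → ℝ) : Prop :=
  ∃ j ∈ Y, z = Pi.single j 1

/-- The complex `z` is supported off the set `Y`. -/
def OffSet (Y : Finset ι) (z : ι → ℝ) : Prop := ∀ j ∈ Y, z j = 0

namespace RN

/-- `Y` is a set of intermediate species of `G`: (I1) every complex is either
supported off `Y` or equals a single species of `Y` with unit coefficient;
(I2) every `Y`-complex is connected to non-intermediate complexes by directed
reaction paths, in both directions, all of whose non-endpoints are
intermediates. -/
def IsIntermediateSet [DecidableEq ι] (G : RN ι) (Y : Finset ι) : Prop :=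
  Y.Nonempty ∧ Y ⊆ G.species ∧
    (∀ y ∈ G.complexes, OffSet Y y ∨ InterCplx Y y) ∧
    (∀ j ∈ Y, ∃ y ∈ G.complexes, ∃ y' ∈ G.complexes, OffSet Y y ∧ OffSet Y y' ∧
      G.PathThrough {z | InterCplx Y z} y (Pi.single j 1) ∧
      G.PathThrough {z | InterCplx Y z} (Pi.single j 1) y')

/-- `G'` is the reduction of `G` by removal of the set of intermediates `Y`:
its reactions are exactly the pairs `y → y'` of distinct non-intermediate
complexes of `G` joined by a directed reaction path all of whose non-endpoints
are intermediates (in particular all reactions of `G` between non-intermediate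
complexes). -/
def IsIntermediateReduction [DecidableEq ι] (G : RN ι) (Y : Finset ι) (G' : RN ι) : Prop :=
  ∀ p : (ι → ℝ) × (ι → ℝ), p ∈ G'.reactions ↔
    (p.1 ∈ G.complexes ∧ p.2 ∈ G.complexes ∧ OffSet Y p.1 ∧ OffSet Y p.2 ∧
      p.1 ≠ p.2 ∧ G.PathThrough {z | InterCplx Y z} p.1 p.2)

end RN

/-- The projection of a complex onto the coordinates outside `E` (the
coordinates in `E` are set to zero). -/
def projOff [DecidableEq ι] (E : Finset ι) (y : ι → ℝ) : ι → ℝ :=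
  fun i => if i ∈ E then 0 else y i

namespace RN

/-- `E` is a set of catalysts of `G`, with `GE` the subnetwork of `G` implied
by `E`: (C1) every reaction either leaves the `E`-coordinates untouched or is
supported entirely in `E`; `GE` consists of the reactions of `G` involving
only species of `E`; and (C2) `GE` has no drainable and no self-replicable
siphons. -/
def IsCatalystSet (G GE : RN ι) (E : Finset ι) : Prop :=
  E.Nonempty ∧ E ⊆ G.species ∧
    (∀ r ∈ G.reactions, (∀ i ∈ E, r.1 i = r.2 i) ∨ (∀ i, i ∉ E → r.1 i = 0 ∧ r.2 i = 0)) ∧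
    (∀ p : (ι → ℝ) × (ι → ℝ), p ∈ GE.reactions ↔
      (p ∈ G.reactions ∧ (∀ i, p.1 i ≠ 0 → i ∈ E) ∧ (∀ i, p.2 i ≠ 0 → i ∈ E))) ∧
    (∀ T : Set ι, GE.IsSiphon T → ¬ GE.Drainable T ∧ ¬ GE.SelfReplicable T)

/-- `G'` is the reduction of `G` by removal of the set of catalysts `E`: its
reactions are the projections off `E` of those reactions of `G` at least one
of whose projected sides is nonzero. -/
def IsCatalystReduction [DecidableEq ι] (G : RN ι) (E : Finset ι) (G' : RN ι) : Prop :=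
  ∀ p : (ι → ℝ) × (ι → ℝ), p ∈ G'.reactions ↔
    ∃ r ∈ G.reactions, p = (projOff E r.1, projOff E r.2) ∧
      (projOff E r.1 ≠ 0 ∨ projOff E r.2 ≠ 0)

/-- A monomolecular network: every complex is either zero or a single species
with unit coefficient. -/
def Monomolecular [DecidableEq ι] (G : RN ι) : Prop :=
  ∀ y ∈ G.complexes, y = 0 ∨ ∃ i ∈ G.species, y = Pi.single i 1

end RN

/-! The catalysts `E` decouple the dynamics. Off `E`, the reactions of `G` and of the reduction `G*`
produce the same net changes (a reaction whose projection vanishes changes nothing off `E`), and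
`G*`'s species are those of `G` outside `E`; so siphons and drainings (replications) avoiding `E`
transfer in both directions. A draining (replication) of a siphon `T` of `G` that meets `E` would,
on `E`, only use reactions supported in `E` (by (C1) the others fix `E`), so `T ∩ E` would be a
drainable (self-replicable) siphon of `G_E`, contradicting (C2). -/

def netChange (L : List ((ι → ℝ) × (ι → ℝ))) (i : ι) : ℝ :=
  (L.map fun r => r.2 i - r.1 i).sum

@[simp]
lemma netChange_nil (i : ι) : netChange [] i = 0 := rfl

@[simp]
lemma netChange_cons (r : (ι → ℝ) × (ι → ℝ)) (L : List ((ι → ℝ) × (ι → ℝ))) (i : ι) :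
    netChange (r :: L) i = (r.2 i - r.1 i) + netChange L i := by
  simp [netChange]

@[simp]
lemma netChange_append (L₁ L₂ : List ((ι → ℝ) × (ι → ℝ))) (i : ι) :
    netChange (L₁ ++ L₂) i = netChange L₁ i + netChange L₂ i := by
  simp [netChange]

namespace RN

lemma mem_species_of_netChange_ne_zero (G : RN ι) {L : List ((ι → ℝ) × (ι → ℝ))}
    (hL : ∀ r ∈ L, r ∈ G.reactions) {i : ι} (h : netChange L i ≠ 0) : i ∈ G.species := by
  by_contra hi
  have hzero : ∀ y ∈ G.complexes, y i = 0 := fun y hy =>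
    not_not.1 fun hyi => hi (G.complexes_supp y hy i hyi)
  refine h (List.sum_eq_zero fun x hx => ?_)
  obtain ⟨r, hr, rfl⟩ := List.mem_map.1 hx
  rw [hzero _ (G.react_mem_fst r (hL r hr)), hzero _ (G.react_mem_snd r (hL r hr)), sub_zero]

/-- `Drainable` and `SelfReplicable` are the cases `P = (· < 0)` and `P = (0 < ·)`. -/
def Attains (G : RN ι) (P : ℝ → Prop) (T : Set ι) : Prop :=
  T.Nonempty ∧ T ⊆ ↑G.species ∧
    ∃ L : List ((ι → ℝ) × (ι → ℝ)), (∀ r ∈ L, r ∈ G.reactions) ∧ ∀ i ∈ T, P (netChange L i)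

lemma Attains.mono {G : RN ι} {P : ℝ → Prop} {T T' : Set ι} (h : G.Attains P T)
    (hne : T'.Nonempty) (hsub : T' ⊆ T) : G.Attains P T' :=
  let ⟨_, hT, L, hL, hP⟩ := h
  ⟨hne, hsub.trans hT, L, hL, fun i hi => hP i (hsub hi)⟩

def SimulatesOn (H K : RN ι) (A : Set ι) : Prop :=
  ∀ L : List ((ι → ℝ) × (ι → ℝ)), (∀ r ∈ L, r ∈ K.reactions) →
    ∃ L' : List ((ι → ℝ) × (ι → ℝ)), (∀ r ∈ L', r ∈ H.reactions) ∧
      ∀ i ∈ A, netChange L' i = netChange L i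

lemma simulatesOn_of_forall_reaction {H K : RN ι} {A : Set ι}
    (h : ∀ r ∈ K.reactions, ∃ L' : List ((ι → ℝ) × (ι → ℝ)), (∀ s ∈ L', s ∈ H.reactions) ∧
      ∀ i ∈ A, netChange L' i = r.2 i - r.1 i) :
    H.SimulatesOn K A := by
  intro L hL
  induction L with
  | nil => exact ⟨[], by simp, by simp⟩
  | cons r L ih =>
    obtain ⟨L₁, hL₁, hr⟩ := h r (hL r List.mem_cons_self)
    obtain ⟨L₂, hL₂, hrest⟩ := ih fun s hs => hL s (List.mem_cons_of_mem r hs)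
    refine ⟨L₁ ++ L₂, fun s hs => ?_, fun i hi => ?_⟩
    · rcases List.mem_append.1 hs with hs | hs
      exacts [hL₁ s hs, hL₂ s hs]
    · rw [netChange_append, netChange_cons, hr i hi, hrest i hi]

lemma Attains.of_simulatesOn {H K : RN ι} {A : Set ι} {P : ℝ → Prop} {T : Set ι}
    (hP : ¬ P 0) (hsim : H.SimulatesOn K A) (h : K.Attains P T) (hTA : T ⊆ A) :
    H.Attains P T := by
  obtain ⟨hne, -, L, hL, hLP⟩ := h
  obtain ⟨L', hL', hsum⟩ := hsim L hL
  have hP' : ∀ i ∈ T, P (netChange L' i) := fun i hi => hsum i (hTA hi) ▸ hLP i hi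
  refine ⟨hne, fun i hi => H.mem_species_of_netChange_ne_zero hL' fun h0 => ?_, L', hL', hP'⟩
  exact hP (h0 ▸ hP' i hi)

end RN

section Reduction

variable [DecidableEq ι]

lemma projOff_apply_of_notMem {E : Finset ι} {i : ι} (hi : i ∉ E) (y : ι → ℝ) :
    projOff E y i = y i := if_neg hi

lemma projOff_apply_of_mem {E : Finset ι} {i : ι} (hi : i ∈ E) (y : ι → ℝ) :
    projOff E y i = 0 := if_pos hi

namespace RN.IsCatalystReduction

variable {G G' : RN ι} {E : Finset ι}

lemma projOff_mem_reactions (hred : G.IsCatalystReduction E G') {r : (ι → ℝ) × (ι → ℝ)}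
    (hr : r ∈ G.reactions) {i : ι} (hi : i ∉ E) (hri : r.1 i ≠ 0 ∨ r.2 i ≠ 0) :
    (projOff E r.1, projOff E r.2) ∈ G'.reactions := by
  refine (hred _).2 ⟨r, hr, rfl, ?_⟩
  refine hri.imp (fun h h0 => h ?_) (fun h h0 => h ?_) <;>
    simpa [projOff_apply_of_notMem hi] using congrFun h0 i

lemma species_eq (hred : G.IsCatalystReduction E G') : G'.species = G.species \ E := by
  ext i
  rw [Finset.mem_sdiff]
  constructor
  · intro hi
    obtain ⟨y, hy, hyi⟩ := G'.species_used i hi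
    obtain ⟨p, hp, hpy⟩ := G'.complexes_used y hy
    obtain ⟨r, hr, rfl, -⟩ := (hred p).1 hp
    have hiE : i ∉ E := fun hiE => by
      rcases hpy with rfl | rfl <;> exact hyi (projOff_apply_of_mem hiE _)
    refine ⟨?_, hiE⟩
    rcases hpy with rfl | rfl <;> simp only [projOff_apply_of_notMem hiE] at hyi
    exacts [G.complexes_supp _ (G.react_mem_fst _ hr) i hyi,
      G.complexes_supp _ (G.react_mem_snd _ hr) i hyi]
  · rintro ⟨hi, hiE⟩
    obtain ⟨y, hy, hyi⟩ := G.species_used i hi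
    obtain ⟨r, hr, hry⟩ := G.complexes_used y hy
    rcases hry with rfl | rfl
    · have hp := hred.projOff_mem_reactions hr hiE (Or.inl hyi)
      exact G'.complexes_supp _ (G'.react_mem_fst _ hp) i
        (by simpa only [projOff_apply_of_notMem hiE] using hyi)
    · have hp := hred.projOff_mem_reactions hr hiE (Or.inr hyi)
      exact G'.complexes_supp _ (G'.react_mem_snd _ hp) i
        (by simpa only [projOff_apply_of_notMem hiE] using hyi)

lemma isSiphon_of_reduction (hred : G.IsCatalystReduction E G') {T : Set ι}
    (hT : G'.IsSiphon T) : G.IsSiphon T := by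
  obtain ⟨hne, hsub, hsip⟩ := hT
  have hTE : ∀ i ∈ T, i ∈ G.species ∧ i ∉ E := fun i hi => by
    simpa [hred.species_eq] using hsub hi
  refine ⟨hne, fun i hi => (hTE i hi).1, ?_⟩
  rintro r hr ⟨i, hiT, hi⟩
  have hp := hred.projOff_mem_reactions hr (hTE i hiT).2 (Or.inr hi.ne')
  obtain ⟨j, hjT, hj⟩ := hsip _ hp ⟨i, hiT, by simpa only [projOff_apply_of_notMem (hTE i hiT).2]⟩
  exact ⟨j, hjT, by simpa only [projOff_apply_of_notMem (hTE j hjT).2] using hj⟩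

lemma isSiphon_reduction_of_disjoint (hred : G.IsCatalystReduction E G') {T : Set ι}
    (hT : G.IsSiphon T) (hTE : Disjoint T E) : G'.IsSiphon T := by
  obtain ⟨hne, hsub, hsip⟩ := hT
  have hTE' : ∀ i ∈ T, i ∉ E := fun i hi hiE => Set.disjoint_left.1 hTE hi hiE
  refine ⟨hne, fun i hi => by simpa [hred.species_eq] using ⟨hsub hi, hTE' i hi⟩, ?_⟩
  rintro p hp ⟨i, hiT, hi⟩
  obtain ⟨r, hr, rfl, -⟩ := (hred p).1 hp
  obtain ⟨j, hjT, hj⟩ :=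
    hsip r hr ⟨i, hiT, by simpa only [projOff_apply_of_notMem (hTE' i hiT)] using hi⟩
  exact ⟨j, hjT, by simpa only [projOff_apply_of_notMem (hTE' j hjT)]⟩

lemma simulatesOn_reduction (hred : G.IsCatalystReduction E G') :
    G.SimulatesOn G' (↑E)ᶜ := by
  refine RN.simulatesOn_of_forall_reaction fun p hp => ?_
  obtain ⟨r, hr, rfl, -⟩ := (hred p).1 hp
  refine ⟨[r], by simpa using hr, fun i hi => ?_⟩
  simp [projOff_apply_of_notMem (show i ∉ E from hi)]

lemma reduction_simulatesOn (hred : G.IsCatalystReduction E G') :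
    G'.SimulatesOn G (↑E)ᶜ := by
  refine RN.simulatesOn_of_forall_reaction fun r hr => ?_
  by_cases h0 : projOff E r.1 = 0 ∧ projOff E r.2 = 0
  · refine ⟨[], by simp, fun i hi => ?_⟩
    have hi : i ∉ E := hi
    have h1 := congrFun h0.1 i
    have h2 := congrFun h0.2 i
    rw [projOff_apply_of_notMem hi] at h1 h2
    simp [h1, h2]
  · refine ⟨[(projOff E r.1, projOff E r.2)], ?_, fun i hi => ?_⟩
    · simpa using (hred _).2 ⟨r, hr, rfl, not_and_or.1 h0⟩
    · simp [projOff_apply_of_notMem (show i ∉ E from hi)]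

end RN.IsCatalystReduction

end Reduction

namespace RN.IsCatalystSet

variable {G GE : RN ι} {E : Finset ι}

lemma simulatesOn (hcat : G.IsCatalystSet GE E) : GE.SimulatesOn G E := by
  obtain ⟨-, -, hC1, hGE, -⟩ := hcat
  refine RN.simulatesOn_of_forall_reaction fun r hr => ?_
  rcases hC1 r hr with hfix | hsupp
  · exact ⟨[], by simp, fun i hi => by simp [hfix i hi]⟩
  · have hrE : r ∈ GE.reactions := (hGE r).2
      ⟨hr, fun i h => not_not.1 fun hi => h (hsupp i hi).1,
        fun i h => not_not.1 fun hi => h (hsupp i hi).2⟩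
    exact ⟨[r], by simpa using hrE, fun i _ => by simp⟩

lemma isSiphon_inter (hcat : G.IsCatalystSet GE E) {T : Set ι} (hT : G.IsSiphon T)
    (hne : (T ∩ E).Nonempty) (hsub : T ∩ E ⊆ GE.species) : GE.IsSiphon (T ∩ E) := by
  refine ⟨hne, hsub, ?_⟩
  rintro p hp ⟨i, ⟨hiT, -⟩, hi⟩
  obtain ⟨hpG, hp1, -⟩ := (hcat.2.2.2.1 p).1 hp
  obtain ⟨j, hjT, hj⟩ := hT.2.2 p hpG ⟨i, hiT, hi⟩
  exact ⟨j, ⟨hjT, hp1 j hj.ne'⟩, hj⟩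

end RN.IsCatalystSet

namespace RN

variable [DecidableEq ι] {G G' GE : RN ι} {E : Finset ι}

lemma forall_isSiphon_not_attains_iff_of_catalyst_removal (hcat : G.IsCatalystSet GE E)
    (hred : G.IsCatalystReduction E G') {P : ℝ → Prop} (hP : ¬ P 0)
    (hGE : ∀ T : Set ι, GE.IsSiphon T → ¬ GE.Attains P T) :
    (∀ T : Set ι, G.IsSiphon T → ¬ G.Attains P T) ↔
      (∀ T : Set ι, G'.IsSiphon T → ¬ G'.Attains P T) := by
  constructor
  · intro hG T hT hatt
    have hTE : T ⊆ (↑E)ᶜ := fun i hi =>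
      (Finset.mem_sdiff.1 (hred.species_eq ▸ hT.2.1 hi)).2
    exact hG T (hred.isSiphon_of_reduction hT)
      (hatt.of_simulatesOn hP hred.simulatesOn_reduction hTE)
  · intro hG' T hT hatt
    by_cases hne : (T ∩ E).Nonempty
    · have hattE : GE.Attains P (T ∩ E) :=
        (hatt.mono hne Set.inter_subset_left).of_simulatesOn hP hcat.simulatesOn
          Set.inter_subset_right
      exact hGE _ (hcat.isSiphon_inter hT hne hattE.2.1) hattE
    · have hTE : Disjoint T E :=
        Set.disjoint_iff_inter_eq_empty.2 (Set.not_nonempty_iff_eq_empty.1 hne)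
      exact hG' T (hred.isSiphon_reduction_of_disjoint hT hTE)
        (hatt.of_simulatesOn hP hred.reduction_simulatesOn hTE.subset_compl_right)

end RN

/-- Theorem 2(i): if `G'` is obtained from `G` by removal of a set of
catalysts `E` (with implied subnetwork `GE`), then `G` has no drainable
(respectively, self-replicable) siphons if and only if `G'` has no drainable
(respectively, self-replicable) siphons. -/
theorem no_drainable_selfReplicable_siphons_iff_of_catalyst_removal
    {ι : Type} [DecidableEq ι] (G G' GE : RN ι) (E : Finset ι)
    (hcat : G.IsCatalystSet GE E) (hred : G.IsCatalystReduction E G') :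
    ((∀ T : Set ι, G.IsSiphon T → ¬ G.Drainable T) ↔
      (∀ T : Set ι, G'.IsSiphon T → ¬ G'.Drainable T)) ∧
    ((∀ T : Set ι, G.IsSiphon T → ¬ G.SelfReplicable T) ↔
      (∀ T : Set ι, G'.IsSiphon T → ¬ G'.SelfReplicable T)) :=
  ⟨RN.forall_isSiphon_not_attains_iff_of_catalyst_removal hcat hred (P := (· < 0))
      (lt_irrefl 0) fun T hT => (hcat.2.2.2.2 T hT).1,
    RN.forall_isSiphon_not_attains_iff_of_catalyst_removal hcat hred (P := (0 < ·))
      (lt_irrefl 0) fun T hT => (hcat.2.2.2.2 T hT).2⟩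
end

section
/- Let G = (S, C, R) be a reaction network with a set of catalysts E ⊆ S and let G* be the reduction of G by removal of E. If G is consistent, then G* is consistent. Conversely, if G* is consistent and the subnetwork G_E implied by E is conservative, then G is consistent. -/
variable {ι : Type}

/-!
Reactions of `G` that involve a non-catalyst leave the catalysts unchanged (C1), so projecting
them off `E` does not change their reaction vectors; all other reactions are those of `G_E`.
Hence a positive flux of `G` pushes forward along the projection (summing over fibres) to one of
`G*`, and conversely a positive flux of `G*`, spread evenly over the fibres, together with a
positive flux of `G_E` gives one of `G`.

`G_E` has a positive flux because a conservative network without drainable siphons is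
consistent. Otherwise Farkas' lemma and a strictly positive conservation law produce
`ν ≥ 0` with `ν · (y' - y) ≤ 0` for every reaction and `< 0` for one. The support of such a `ν`
is a siphon; as it is not drainable, Farkas' lemma gives a nonzero `μ ≥ 0` supported in it with
`μ · (y' - y) ≥ 0` for every reaction, and subtracting from `ν` the largest multiple of `μ` that
keeps it nonnegative shrinks the support. Induction on the size of the support shows that
`ν · (y' - y) = 0` for every reaction.
-/

open Finset Matrix Function

theorem exists_dotProduct_neg_of_forall_sum_smul_ne {κ α : Type*} [Fintype κ] (t : Finset α)
    (f : α → κ → ℝ) (b : κ → ℝ) (h : ∀ c : α → ℝ, 0 ≤ c → ∑ a ∈ t, c a • f a ≠ b) :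
    ∃ y : κ → ℝ, (∀ a ∈ t, 0 ≤ f a ⬝ᵥ y) ∧ b ⬝ᵥ y < 0 := by
  classical
  induction t using Finset.induction_on generalizing f b with
  | empty =>
    have hb : b ≠ 0 := by simpa [eq_comm] using h 0 le_rfl
    refine ⟨-b, by simp, ?_⟩
    rw [dotProduct_neg, neg_lt_zero]
    exact (dotProduct_self_star_nonneg b).lt_of_ne' (dotProduct_self_eq_zero.not.mpr hb)
  | insert a₀ t ha₀ ih =>
    have h' : ∀ c : α → ℝ, 0 ≤ c → ∀ x : ℝ, 0 ≤ x → x • f a₀ + ∑ a ∈ t, c a • f a ≠ b := by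
      intro c hc x hx
      convert h (update c a₀ x) (le_update_iff.2 ⟨hx, fun _ _ => hc _⟩) using 1
      rw [sum_insert ha₀, update_self]
      exact congrArg _ (sum_congr rfl fun a ha => by
        rw [update_of_ne (ne_of_mem_of_not_mem ha ha₀)]).symm
    obtain ⟨y, hy, hby⟩ := ih f b fun c hc => by simpa using h' c hc 0 le_rfl
    set w := f a₀
    by_cases hw : 0 ≤ w ⬝ᵥ y
    · exact ⟨y, forall_mem_insert _ _ _ |>.mpr ⟨hw, hy⟩, hby⟩
    set d := w ⬝ᵥ y
    have hd : d < 0 := not_le.mp hw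
    -- the projection along `w` onto the hyperplane orthogonal to `y`
    set g : (κ → ℝ) → κ → ℝ := fun v => v - (v ⬝ᵥ y / d) • w
    have hg : ∀ c : α → ℝ, 0 ≤ c → ∑ a ∈ t, c a • g (f a) ≠ g b := by
      intro c hc heq
      refine h' c hc ((b ⬝ᵥ y - ∑ a ∈ t, c a * (f a ⬝ᵥ y)) / d) (div_nonneg_of_nonpos ?_ hd.le) ?_
      · linarith [sum_nonneg fun a ha => mul_nonneg (hc a) (hy a ha)]
      · simp only [g, smul_sub, sum_sub_distrib, smul_smul, ← sum_smul] at heq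
        simp only [sub_div, sum_div, mul_div_assoc]
        linear_combination (norm := module) heq
    obtain ⟨z, hz, hbz⟩ := ih (fun a => g (f a)) (g b) hg
    have key : ∀ v, v ⬝ᵥ (z - (w ⬝ᵥ z / d) • y) = g v ⬝ᵥ z := by
      intro v
      simp only [g, dotProduct_sub, sub_dotProduct, dotProduct_smul, smul_dotProduct, smul_eq_mul,
        dotProduct_comm v y, dotProduct_comm w z]
      ring
    refine ⟨z - (w ⬝ᵥ z / d) • y, forall_mem_insert _ _ _ |>.mpr ⟨?_, fun a ha => ?_⟩, ?_⟩
    · rw [key, show g w = 0 by simp [g, d, div_self hd.ne], zero_dotProduct]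
    · rw [key]; exact hz a ha
    · rw [key]; exact hbz

theorem exists_nonneg_dual_of_forall_exists_lt {ι α : Type*} (s : Finset ι) (t : Finset α)
    (f : α → ι → ℝ) (b : ι → ℝ) (h : ∀ c : α → ℝ, 0 ≤ c → ∃ i ∈ s, b i < ∑ a ∈ t, c a * f a i) :
    ∃ y : ι → ℝ, 0 ≤ y ∧ (∀ a ∈ t, 0 ≤ ∑ i ∈ s, f a i * y i) ∧ ∑ i ∈ s, b i * y i < 0 := by
  classical
  -- slack variables, one for each coordinate in `s`, turn the inequalities into equations
  obtain ⟨y, hy, hby⟩ := exists_dotProduct_neg_of_forall_sum_smul_ne (t.disjSum univ)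
    (Sum.elim (fun a (i : s) => f a i) fun j => Pi.single j 1) (fun i => b i) <| by
    intro c hc heq
    obtain ⟨i, hi, hlt⟩ := h (fun a => c (Sum.inl a)) fun a => hc _
    have := congrFun heq ⟨i, hi⟩
    simp [sum_disjSum, Finset.sum_apply, Pi.single_apply] at this
    have hslack : 0 ≤ c (Sum.inr ⟨i, hi⟩) := hc _
    linarith
  have hdot : ∀ u : ι → ℝ, ∑ i ∈ s, u i * (fun i => if h : i ∈ s then y ⟨i, h⟩ else 0) i
      = (fun i : s => u i) ⬝ᵥ y := by
    intro u
    rw [← sum_coe_sort]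
    simp [dotProduct]
  refine ⟨fun i => if h : i ∈ s then y ⟨i, h⟩ else 0, fun i => ?_, fun a ha => ?_, ?_⟩
  · dsimp only
    split_ifs with hi
    · simpa using hy (Sum.inr ⟨i, hi⟩) (by simp)
    · exact le_rfl
  · rw [hdot]; exact hy (Sum.inl a) (by simpa using ha)
  · rwa [hdot]

theorem Finset.exists_pos_sum_mul_comp_eq_sum_image {α β : Type*} [DecidableEq β] (K : Finset α)
    (π : α → β) (w : β → ℝ) (hw : ∀ r ∈ K, 0 < w (π r)) :
    ∃ v : α → ℝ, (∀ r ∈ K, 0 < v r) ∧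
      ∀ F : β → ℝ, ∑ r ∈ K, v r * F (π r) = ∑ p ∈ K.image π, w p * F p := by
  have hfib : ∀ r ∈ K, r ∈ {x ∈ K | π x = π r} := fun r hr => mem_filter.2 ⟨hr, rfl⟩
  have hcard : ∀ r ∈ K, (0 : ℝ) < #{x ∈ K | π x = π r} := fun r hr => by
    exact_mod_cast card_pos.2 ⟨r, hfib r hr⟩
  refine ⟨fun r => w (π r) / #{x ∈ K | π x = π r}, fun r hr => div_pos (hw r hr) (hcard r hr),
    fun F => (sum_image' _ fun r hr => ?_).symm⟩
  have hconst : ∀ x ∈ {x ∈ K | π x = π r}, w (π x) / #{y ∈ K | π y = π x} * F (π x) =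
      w (π r) / #{y ∈ K | π y = π r} * F (π r) := fun x hx => by rw [(mem_filter.1 hx).2]
  rw [sum_congr rfl hconst, sum_const, nsmul_eq_mul]
  field_simp [(hcard r hr).ne']

theorem exists_pos_sub_smul_nonneg_card_lt {ι : Type*} (s : Finset ι) {ν μ : ι → ℝ}
    (hν : ∀ i ∈ s, 0 ≤ ν i) (hμ : 0 ≤ μ) (hμν : ∀ i, μ i ≠ 0 → i ∈ s ∧ ν i ≠ 0)
    (hμ₀ : ∃ i, μ i ≠ 0) :
    ∃ ε : ℝ, 0 < ε ∧ (∀ i ∈ s, 0 ≤ (ν - ε • μ) i) ∧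
      #{i ∈ s | (ν - ε • μ) i ≠ 0} < #{i ∈ s | ν i ≠ 0} := by
  classical
  obtain ⟨i₀, hi₀⟩ := hμ₀
  obtain ⟨i₁, hi₁, hmin⟩ := exists_min_image {i ∈ s | μ i ≠ 0} (fun i => ν i / μ i)
    ⟨i₀, mem_filter.2 ⟨(hμν i₀ hi₀).1, hi₀⟩⟩
  rw [mem_filter] at hi₁
  have hμpos : ∀ i, μ i ≠ 0 → 0 < μ i := fun i hi => (hμ i).lt_of_ne' hi
  refine ⟨ν i₁ / μ i₁, div_pos ((hν i₁ hi₁.1).lt_of_ne' (hμν i₁ hi₁.2).2) (hμpos i₁ hi₁.2),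
    fun i hi => ?_, card_lt_card ?_⟩
  · by_cases hμi : μ i = 0
    · simpa [hμi] using hν i hi
    · have := (le_div_iff₀ (hμpos i hμi)).1 (hmin i (mem_filter.2 ⟨hi, hμi⟩))
      simp only [Pi.sub_apply, Pi.smul_apply, smul_eq_mul]
      linarith
  · refine (ssubset_iff_of_subset fun i => ?_).2 ⟨i₁, ?_, ?_⟩
    · simp only [mem_filter]
      rintro ⟨hi, hne⟩
      refine ⟨hi, fun h0 => hne ?_⟩
      have : μ i = 0 := by_contra fun h => (hμν i h).2 h0
      simp [h0, this]
    · exact mem_filter.2 ⟨hi₁.1, (hμν i₁ hi₁.2).2⟩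
    · simp [div_mul_cancel₀ _ hi₁.2]

theorem projOff_eq_zero_iff [DecidableEq ι] {E : Finset ι} {y : ι → ℝ} :
    projOff E y = 0 ↔ ∀ i, y i ≠ 0 → i ∈ E := by
  simp only [funext_iff, projOff, Pi.zero_apply, ite_eq_left_iff]
  exact forall_congr' fun i => not_imp_comm

theorem prodMap_projOff_eq_zero_iff [DecidableEq ι] {E : Finset ι} {r : (ι → ℝ) × (ι → ℝ)} :
    Prod.map (projOff E) (projOff E) r = 0 ↔
      (∀ i, r.1 i ≠ 0 → i ∈ E) ∧ ∀ i, r.2 i ≠ 0 → i ∈ E := by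
  rw [Prod.map, Prod.mk_eq_zero, projOff_eq_zero_iff, projOff_eq_zero_iff]

namespace RN

variable (H : RN ι)

def netChange (r : (ι → ℝ) × (ι → ℝ)) : (ι → ℝ) →ₗ[ℝ] ℝ where
  toFun ν := ∑ i ∈ H.species, ν i * (r.2 i - r.1 i)
  map_add' ν μ := by simp only [Pi.add_apply, add_mul, sum_add_distrib]
  map_smul' c ν := by simp only [Pi.smul_apply, smul_eq_mul, mul_assoc, mul_sum, RingHom.id_apply]

@[simp]
theorem netChange_apply (r : (ι → ℝ) × (ι → ℝ)) (ν : ι → ℝ) :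
    H.netChange r ν = ∑ i ∈ H.species, ν i * (r.2 i - r.1 i) :=
  rfl

theorem sub_eq_zero_of_notMem_species {r : (ι → ℝ) × (ι → ℝ)} (hr : r ∈ H.reactions) {i : ι}
    (hi : i ∉ H.species) : r.2 i - r.1 i = 0 := by
  have h₁ := (H.complexes_supp _ (H.react_mem_fst r hr) i).mt hi
  have h₂ := (H.complexes_supp _ (H.react_mem_snd r hr) i).mt hi
  rw [not_not] at h₁ h₂
  rw [h₁, h₂, sub_zero]

theorem drainable_of_sum_mul_le_neg_one {T : Set ι} (hT : T.Nonempty) (hTs : T ⊆ H.species)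
    {c : (ι → ℝ) × (ι → ℝ) → ℝ} (hc : 0 ≤ c)
    (hcT : ∀ i ∈ T, ∑ r ∈ H.reactions, c r * (r.2 i - r.1 i) ≤ -1) : H.Drainable T := by
  -- round the flux `N • c` up to whole multiplicities, for `N` larger than all rounding errors
  set M := ∑ i ∈ H.species, ∑ r ∈ H.reactions, |r.2 i - r.1 i|
  obtain ⟨N, hN⟩ := exists_nat_gt M
  set n : (ι → ℝ) × (ι → ℝ) → ℕ := fun r => ⌈N * c r⌉₊
  refine ⟨hT, hTs, H.reactions.toList.flatMap fun r => List.replicate (n r) r,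
    fun r hr => ?_, fun i hi => ?_⟩
  · obtain ⟨r', hr', hrr'⟩ := List.mem_flatMap.1 hr
    rw [List.eq_of_mem_replicate hrr']
    exact mem_toList.1 hr'
  have hround : ∀ r,
      (n r : ℝ) * (r.2 i - r.1 i) ≤ N * (c r * (r.2 i - r.1 i)) + |r.2 i - r.1 i| := by
    intro r
    have hcr : 0 ≤ c r := hc r
    have h₁ := Nat.le_ceil (N * c r)
    have h₂ := Nat.ceil_lt_add_one (mul_nonneg N.cast_nonneg hcr)
    nlinarith [le_abs_self (r.2 i - r.1 i), neg_abs_le (r.2 i - r.1 i)]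
  calc ((H.reactions.toList.flatMap fun r => List.replicate (n r) r).map
          fun r => r.2 i - r.1 i).sum
      = ∑ r ∈ H.reactions, (n r : ℝ) * (r.2 i - r.1 i) := by
        simp [List.flatMap, List.sum_flatten, Function.comp_def, ← sum_map_toList]
    _ ≤ ∑ r ∈ H.reactions, (N * (c r * (r.2 i - r.1 i)) + |r.2 i - r.1 i|) :=
        sum_le_sum fun r _ => hround r
    _ = N * ∑ r ∈ H.reactions, c r * (r.2 i - r.1 i) + ∑ r ∈ H.reactions, |r.2 i - r.1 i| := by
        rw [sum_add_distrib, mul_sum]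
    _ ≤ N * (-1) + M := add_le_add (mul_le_mul_of_nonneg_left (hcT i hi) N.cast_nonneg)
        (single_le_sum (f := fun j => ∑ r ∈ H.reactions, |r.2 j - r.1 j|)
          (fun j _ => sum_nonneg fun r _ => abs_nonneg _) (hTs hi))
    _ < 0 := by linarith

theorem exists_netChange_nonneg_of_not_drainable {T : Set ι} (hT : T.Nonempty)
    (hTs : T ⊆ H.species) (hndr : ¬ H.Drainable T) :
    ∃ μ : ι → ℝ, 0 ≤ μ ∧ (∃ i, μ i ≠ 0) ∧ (∀ i, μ i ≠ 0 → i ∈ T) ∧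
      ∀ r ∈ H.reactions, 0 ≤ H.netChange r μ := by
  classical
  obtain ⟨y, hy, hyr, hy₁⟩ := exists_nonneg_dual_of_forall_exists_lt {i ∈ H.species | i ∈ T}
    H.reactions (fun r i => r.2 i - r.1 i) (fun _ => -1) fun c hc => by
      by_contra! h
      exact hndr (H.drainable_of_sum_mul_le_neg_one hT hTs hc fun i hi =>
        h i (mem_filter.2 ⟨hTs hi, hi⟩))
  have hnet : ∀ r, H.netChange r (T.indicator y) =
      ∑ i ∈ H.species with i ∈ T, (r.2 i - r.1 i) * y i := by
    intro r
    rw [sum_filter, netChange_apply]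
    exact sum_congr rfl fun i _ => by by_cases hi : i ∈ T <;> simp [hi, mul_comm]
  have hpos : ∑ i ∈ H.species with i ∈ T, (0 : ℝ) < ∑ i ∈ H.species with i ∈ T, y i := by
    rw [sum_const_zero]
    simpa using hy₁
  obtain ⟨i, hi, hyi⟩ := exists_lt_of_sum_lt hpos
  refine ⟨T.indicator y, Set.indicator_nonneg fun i _ => hy i, ⟨i, ?_⟩,
    fun i hi => (Set.indicator_apply_ne_zero.1 hi).1, fun r hr => (hnet r).symm ▸ hyr r hr⟩
  simp [(mem_filter.1 hi).2, hyi.ne']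

theorem isSiphon_of_netChange_nonpos {ν : ι → ℝ} (hν : ∀ i ∈ H.species, 0 ≤ ν i)
    (hne : ∃ i ∈ H.species, ν i ≠ 0) (hle : ∀ r ∈ H.reactions, H.netChange r ν ≤ 0) :
    H.IsSiphon {i | i ∈ H.species ∧ ν i ≠ 0} := by
  refine ⟨hne, fun i hi => hi.1, fun r hr ⟨i, ⟨hi, hνi⟩, hri⟩ => ?_⟩
  have hterm : ∀ y ∈ H.complexes, ∀ j ∈ H.species, 0 ≤ ν j * y j :=
    fun y hy j hj => mul_nonneg (hν j hj) (H.complexes_nonneg y hy j)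
  have hprod : 0 < ∑ j ∈ H.species, ν j * r.2 j :=
    (mul_pos ((hν i hi).lt_of_ne' hνi) hri).trans_le
      (single_le_sum (hterm _ (H.react_mem_snd r hr)) hi)
  have hreact : ∑ j ∈ H.species, (0 : ℝ) < ∑ j ∈ H.species, ν j * r.1 j := by
    have := hle r hr
    simp only [netChange_apply, mul_sub, sum_sub_distrib] at this
    rw [sum_const_zero]
    linarith
  obtain ⟨j, hj, hpos⟩ := exists_lt_of_sum_lt hreact
  exact ⟨j, ⟨hj, left_ne_zero_of_mul hpos.ne'⟩, pos_of_mul_pos_right hpos (hν j hj)⟩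

theorem netChange_eq_zero_of_nonpos (hH : ∀ T, H.IsSiphon T → ¬ H.Drainable T) {ν : ι → ℝ}
    (hν : ∀ i ∈ H.species, 0 ≤ ν i) (hle : ∀ r ∈ H.reactions, H.netChange r ν ≤ 0) :
    ∀ r ∈ H.reactions, H.netChange r ν = 0 := by
  classical
  induction hn : #{i ∈ H.species | ν i ≠ 0} using Nat.strong_induction_on generalizing ν with
  | _ n ih =>
  by_cases hne : ∃ i ∈ H.species, ν i ≠ 0
  · have hT := H.isSiphon_of_netChange_nonpos hν hne hle
    obtain ⟨μ, hμ, hμ₀, hμT, hμr⟩ :=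
      H.exists_netChange_nonneg_of_not_drainable hT.1 hT.2.1 (hH _ hT)
    obtain ⟨ε, hε, hν', hcard⟩ := exists_pos_sub_smul_nonneg_card_lt H.species hν hμ hμT hμ₀
    have hsub : ∀ r, H.netChange r (ν - ε • μ) = H.netChange r ν - ε * H.netChange r μ := by
      simp only [map_sub, map_smul, smul_eq_mul, implies_true]
    have h' := ih _ (hn ▸ hcard) hν' (fun r hr => by
      rw [hsub]; nlinarith [hle r hr, hμr r hr]) rfl
    intro r hr
    have := h' r hr
    rw [hsub] at this
    nlinarith [hle r hr, hμr r hr]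
  · push Not at hne
    exact fun r _ => sum_eq_zero fun i hi => by rw [hne i hi, zero_mul]

variable {H}

theorem Conservative.consistent_of_sum_nonpos (hcons : H.Conservative)
    {v : (ι → ℝ) × (ι → ℝ) → ℝ} (hv : ∀ r ∈ H.reactions, 0 < v r)
    (hle : ∀ i ∈ H.species, ∑ r ∈ H.reactions, v r * (r.2 i - r.1 i) ≤ 0) : H.Consistent := by
  obtain ⟨ω, hω, hωr⟩ := hcons
  refine ⟨v, hv, fun i => ?_⟩
  by_cases hi : i ∈ H.species
  · -- `ω` is orthogonal to `N v`, whose coordinates are nonpositive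
    have htot : ∑ j ∈ H.species, ω j * ∑ r ∈ H.reactions, v r * (r.2 j - r.1 j) = 0 := by
      simp only [mul_sum]
      rw [sum_comm]
      refine sum_eq_zero fun r hr => ?_
      simp only [mul_left_comm (ω _)]
      rw [← mul_sum, hωr r hr, mul_zero]
    have := (sum_eq_zero_iff_of_nonpos fun j hj =>
      mul_nonpos_of_nonneg_of_nonpos (hω j hj).le (hle j hj)).1 htot i hi
    exact (mul_eq_zero.1 this).resolve_left (hω i hi).ne'
  · exact sum_eq_zero fun r hr => by rw [H.sub_eq_zero_of_notMem_species hr hi, mul_zero]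

theorem Conservative.consistent (hcons : H.Conservative)
    (hH : ∀ T, H.IsSiphon T → ¬ H.Drainable T) : H.Consistent := by
  by_contra hcon
  obtain ⟨y, hy, hyr, hby⟩ := exists_nonneg_dual_of_forall_exists_lt H.species H.reactions
    (fun r i => r.2 i - r.1 i) (fun i => -∑ r ∈ H.reactions, (r.2 i - r.1 i)) fun c hc => by
      -- a solution `c` of `N c ≤ -N 1` would make `c + 1` a positive flux with `N (c + 1) ≤ 0`
      by_contra! h
      refine hcon (hcons.consistent_of_sum_nonpos (v := c + 1) (fun r _ => ?_) fun i hi => ?_)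
      · have : 0 ≤ c r := hc r
        simp only [Pi.add_apply, Pi.one_apply]
        linarith
      · have := h i hi
        simp only [Pi.add_apply, Pi.one_apply, add_mul, one_mul, sum_add_distrib]
        linarith
  have hnet : ∀ r, H.netChange r y = ∑ i ∈ H.species, (r.2 i - r.1 i) * y i :=
    fun r => sum_congr rfl fun _ _ => mul_comm _ _
  obtain ⟨r₀, hr₀, hpos⟩ : ∃ r ∈ H.reactions, (0 : ℝ) < H.netChange r y := by
    refine exists_lt_of_sum_lt ?_
    simp only [hnet, sum_const_zero]
    rw [sum_comm]
    simp only [neg_mul, sum_neg_distrib, sum_mul] at hby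
    linarith
  obtain ⟨ω, hω, hωr⟩ := hcons
  -- a large multiple of the conservation law dominates `y`
  set m := ∑ i ∈ H.species, y i / ω i
  have hν : ∀ i ∈ H.species, 0 ≤ (m • ω - y) i := fun i hi => by
    have := single_le_sum (f := fun j => y j / ω j)
      (fun j hj => div_nonneg (hy j) (hω j hj).le) hi
    rw [div_le_iff₀ (hω i hi)] at this
    simp only [Pi.sub_apply, Pi.smul_apply, smul_eq_mul]
    linarith
  have hνr : ∀ r ∈ H.reactions, H.netChange r (m • ω - y) = -H.netChange r y := fun r hr => by
    rw [map_sub, map_smul, show H.netChange r ω = 0 from hωr r hr, smul_zero, zero_sub]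
  have := H.netChange_eq_zero_of_nonpos hH hν
    (fun r hr => by rw [hνr r hr, neg_nonpos, hnet]; exact hyr r hr) r₀ hr₀
  rw [hνr r₀ hr₀] at this
  linarith

variable [DecidableEq ι] {G G' GE : RN ι} {E : Finset ι}

open Classical in
theorem IsCatalystReduction.reactions_eq (hred : G.IsCatalystReduction E G') :
    G'.reactions = {r ∈ G.reactions | Prod.map (projOff E) (projOff E) r ≠ 0}.image
      (Prod.map (projOff E) (projOff E)) := by
  ext p
  simp only [hred p, mem_image, mem_filter, Prod.map, ne_eq, Prod.mk_eq_zero, not_and_or]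
  exact exists_congr fun r => by tauto

theorem IsCatalystReduction.consistent (hred : G.IsCatalystReduction E G') (hG : G.Consistent) :
    G'.Consistent := by
  classical
  obtain ⟨v, hv, hvN⟩ := hG
  set π := Prod.map (projOff E) (projOff E)
  set K := {r ∈ G.reactions | π r ≠ 0}
  rw [Consistent, hred.reactions_eq]
  refine ⟨fun p => ∑ r ∈ K with π r = p, v r, fun p hp => ?_, fun i => ?_⟩
  · obtain ⟨r, hr, rfl⟩ := mem_image.1 hp
    exact sum_pos (fun x hx => hv x (mem_filter.1 (mem_filter.1 hx).1).1)
      ⟨r, mem_filter.2 ⟨hr, rfl⟩⟩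
  calc ∑ p ∈ K.image π, (∑ r ∈ K with π r = p, v r) * (p.2 i - p.1 i)
      = ∑ p ∈ K.image π, ∑ r ∈ K with π r = p, v r * ((π r).2 i - (π r).1 i) := by
        refine sum_congr rfl fun p _ => ?_
        rw [sum_mul]
        exact sum_congr rfl fun r hr => by rw [(mem_filter.1 hr).2]
    _ = ∑ r ∈ K, v r * ((π r).2 i - (π r).1 i) :=
        sum_fiberwise_of_maps_to (fun r hr => mem_image_of_mem π hr) _
    _ = ∑ r ∈ G.reactions, v r * ((π r).2 i - (π r).1 i) :=
        sum_filter_of_ne fun r _ h hπ => h (by rw [hπ]; simp)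
    _ = 0 := by by_cases hi : i ∈ E <;> simp [π, projOff, hi, hvN i]

theorem IsCatalystSet.consistent_of_reduction (hcat : G.IsCatalystSet GE E)
    (hred : G.IsCatalystReduction E G') (hG' : G'.Consistent) (hGE : GE.Consistent) :
    G.Consistent := by
  classical
  obtain ⟨-, -, hC1, hGEr, -⟩ := hcat
  obtain ⟨w, hw, hwN⟩ := hG'
  obtain ⟨u, hu, huN⟩ := hGE
  set π := Prod.map (projOff E) (projOff E)
  set K := {r ∈ G.reactions | π r ≠ 0}
  have hGEK : GE.reactions = {r ∈ G.reactions | ¬ π r ≠ 0} := by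
    ext r
    simp [hGEr r, π, prodMap_projOff_eq_zero_iff]
  have hK : ∀ r ∈ K, ∀ i, (π r).2 i - (π r).1 i = r.2 i - r.1 i := by
    intro r hr i
    obtain ⟨hrG, hπ⟩ := mem_filter.1 hr
    rcases hC1 r hrG with h | h
    · by_cases hi : i ∈ E <;> simp [π, projOff, hi, h i]
    · exact absurd (prodMap_projOff_eq_zero_iff.2
        ⟨fun j hj => by_contra fun hjE => hj (h j hjE).1,
          fun j hj => by_contra fun hjE => hj (h j hjE).2⟩) hπ
  obtain ⟨v, hv, hvF⟩ := K.exists_pos_sum_mul_comp_eq_sum_image π w fun r hr =>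
    hw _ (hred.reactions_eq ▸ mem_image_of_mem π hr)
  refine ⟨fun r => if π r ≠ 0 then v r else u r, fun r hr => ?_, fun i => ?_⟩
  · dsimp only
    split_ifs with h
    · exact hv r (mem_filter.2 ⟨hr, h⟩)
    · exact hu r (by rw [hGEK]; exact mem_filter.2 ⟨hr, h⟩)
  rw [← sum_filter_add_sum_filter_not G.reactions fun r => π r ≠ 0, ← hGEK]
  have hsumK : ∑ r ∈ K, (if π r ≠ 0 then v r else u r) * (r.2 i - r.1 i) =
      ∑ p ∈ G'.reactions, w p * (p.2 i - p.1 i) := by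
    rw [hred.reactions_eq, ← hvF fun p => p.2 i - p.1 i]
    exact sum_congr rfl fun r hr => by rw [if_pos (mem_filter.1 hr).2, hK r hr i]
  have hsumGE : ∑ r ∈ GE.reactions, (if π r ≠ 0 then v r else u r) * (r.2 i - r.1 i) =
      ∑ r ∈ GE.reactions, u r * (r.2 i - r.1 i) :=
    sum_congr rfl fun r hr => by
      rw [hGEK, mem_filter] at hr
      rw [if_neg hr.2]
  rw [hsumK, hsumGE, hwN i, huN i, add_zero]

end RN

/-- Theorem 2(iii): if `G'` is obtained from `G` by removal of a set of
catalysts `E` (with implied subnetwork `GE`), then consistency of `G` implies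
consistency of `G'`; conversely, if `G'` is consistent and `GE` is
conservative, then `G` is consistent. -/
theorem consistent_removal_of_catalysts
    {ι : Type} [DecidableEq ι] (G G' GE : RN ι) (E : Finset ι)
    (hcat : G.IsCatalystSet GE E) (hred : G.IsCatalystReduction E G') :
    (G.Consistent → G'.Consistent) ∧
    (G'.Consistent → GE.Conservative → G.Consistent) := by
  have ⟨_, _, _, _, hC2⟩ := hcat
  exact ⟨hred.consistent, fun hG' hGE =>
    hcat.consistent_of_reduction hred hG' (hGE.consistent fun T hT => (hC2 T hT).1)⟩
end

section
/- Let G = (S, C, R) be a reaction network with a set of catalysts E ⊆ S and let G* be the reduction of G by removal of E. If G is conservative, then G* is conservative. Conversely, if G* is conservative and the subnetwork G_E implied by E is conservative, then G is conservative. -/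
variable {ι : Type}

private lemma sum_move {α : Type} [DecidableEq α] {s t : Finset α} {f : α → ℝ}
    (h : ∀ i, f i ≠ 0 → i ∈ s ∧ i ∈ t) :
    ∑ i ∈ s, f i = ∑ i ∈ t, f i := by
  rw [show (∑ i ∈ s, f i) = ∑ i ∈ s ∩ t, f i from
    (Finset.sum_subset Finset.inter_subset_left (fun x hx hnx => by
      by_contra hf; exact hnx (Finset.mem_inter.2 ⟨hx, (h x hf).2⟩))).symm]
  exact Finset.sum_subset Finset.inter_subset_right (fun x hx hnx => by
      by_contra hf; exact hnx (Finset.mem_inter.2 ⟨(h x hf).1, hx⟩))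

/-- Theorem 2(iv): if `G'` is obtained from `G` by removal of a set of
catalysts `E` (with implied subnetwork `GE`), then conservativity of `G`
implies conservativity of `G'`; conversely, if `G'` and `GE` are both
conservative, then `G` is conservative. -/
theorem conservative_removal_of_catalysts
    {ι : Type} [DecidableEq ι] (G G' GE : RN ι) (E : Finset ι)
    (hcat : G.IsCatalystSet GE E) (hred : G.IsCatalystReduction E G') :
    (G.Conservative → G'.Conservative) ∧
    (G'.Conservative → GE.Conservative → G.Conservative) := by
  obtain ⟨hEne, hEsub, hC1, hGEiff, hC2⟩ := hcat
  constructor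
  · rintro ⟨ω, hpos, hcons⟩
    refine ⟨ω, ?_, ?_⟩
    · intro i hi
      obtain ⟨y, hy, hyi⟩ := G'.species_used i hi
      obtain ⟨r, hr, hry⟩ := G'.complexes_used y hy
      obtain ⟨s, hs, hps, -⟩ := (hred r).1 hr
      have hzy : ∃ z ∈ G.complexes, y = projOff E z := by
        rcases hry with h | h
        · exact ⟨s.1, G.react_mem_fst s hs, by rw [← h, hps]⟩
        · exact ⟨s.2, G.react_mem_snd s hs, by rw [← h, hps]⟩
      obtain ⟨z, hz, hyz⟩ := hzy
      rw [hyz] at hyi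
      simp only [projOff] at hyi
      by_cases hie : i ∈ E
      · simp [hie] at hyi
      · simp only [hie, if_false] at hyi
        exact hpos i (G.complexes_supp z hz i hyi)
    · intro r hr
      obtain ⟨s, hs, hps, hnz⟩ := (hred r).1 hr
      rcases hC1 s hs with hA | hB
      · have key : ∀ i, ω i * (r.2 i - r.1 i) = ω i * (s.2 i - s.1 i) := by
          intro i
          rw [hps]
          simp only [projOff]
          by_cases hie : i ∈ E
          · simp [hie, hA i hie]
          · simp [hie]
        calc ∑ i ∈ G'.species, ω i * (r.2 i - r.1 i)
            = ∑ i ∈ G.species, ω i * (r.2 i - r.1 i) := by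
              refine sum_move ?_
              intro i hfi
              have hdiff : r.2 i - r.1 i ≠ 0 := fun h => hfi (by rw [h, mul_zero])
              have hne : r.1 i ≠ 0 ∨ r.2 i ≠ 0 := by
                by_contra h
                push_neg at h
                rw [h.1, h.2] at hdiff
                simp at hdiff
              have hi' : i ∈ G'.species := by
                rcases hne with h | h
                · exact G'.complexes_supp r.1 (G'.react_mem_fst r hr) i h
                · exact G'.complexes_supp r.2 (G'.react_mem_snd r hr) i h
              have hiG : i ∈ G.species := by
                rcases hne with h | h
                · rw [hps] at h
                  simp only [projOff] at h
                  by_cases hie : i ∈ E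
                  · simp [hie] at h
                  · simp only [hie, if_false] at h
                    exact G.complexes_supp s.1 (G.react_mem_fst s hs) i h
                · rw [hps] at h
                  simp only [projOff] at h
                  by_cases hie : i ∈ E
                  · simp [hie] at h
                  · simp only [hie, if_false] at h
                    exact G.complexes_supp s.2 (G.react_mem_snd s hs) i h
              exact ⟨hi', hiG⟩
          _ = ∑ i ∈ G.species, ω i * (s.2 i - s.1 i) :=
              Finset.sum_congr rfl fun i _ => key i
          _ = 0 := hcons s hs
      · exfalso
        have h1 : projOff E s.1 = 0 := by
          funext i
          simp only [projOff, Pi.zero_apply]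
          by_cases hie : i ∈ E
          · simp [hie]
          · simp [hie, (hB i hie).1]
        have h2 : projOff E s.2 = 0 := by
          funext i
          simp only [projOff, Pi.zero_apply]
          by_cases hie : i ∈ E
          · simp [hie]
          · simp [hie, (hB i hie).2]
        rcases hnz with h | h
        · exact h h1
        · exact h h2
  · rintro ⟨ω', hpos', hcons'⟩ ⟨ωE, hposE, hconsE⟩
    refine ⟨fun i => if i ∈ E then (if i ∈ GE.species then ωE i else 1)
      else (if i ∈ G'.species then ω' i else 1), ?_, ?_⟩
    · intro i _
      by_cases h1 : i ∈ E
      · by_cases h2 : i ∈ GE.species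
        · simpa [h1, h2] using hposE i h2
        · simp [h1, h2]
      · by_cases h3 : i ∈ G'.species
        · simpa [h1, h3] using hpos' i h3
        · simp [h1, h3]
    · intro r hr
      rcases hC1 r hr with hA | hB
      · have hnz : projOff E r.1 ≠ 0 ∨ projOff E r.2 ≠ 0 := by
          by_contra h
          push_neg at h
          apply G.no_loops r hr
          funext i
          by_cases hie : i ∈ E
          · exact hA i hie
          · have h1 := congrFun h.1 i
            have h2 := congrFun h.2 i
            simp only [projOff, hie, if_false, Pi.zero_apply] at h1 h2
            rw [h1, h2]
        have hr' : (projOff E r.1, projOff E r.2) ∈ G'.reactions :=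
          (hred _).2 ⟨r, hr, rfl, hnz⟩
        have h0 := hcons' _ hr'
        have key : ∀ i, (if i ∈ E then (if i ∈ GE.species then ωE i else 1)
            else (if i ∈ G'.species then ω' i else 1)) * (r.2 i - r.1 i)
            = ω' i * (projOff E r.2 i - projOff E r.1 i) := by
          intro i
          by_cases hie : i ∈ E
          · simp [projOff, hie, hA i hie]
          · by_cases hi' : i ∈ G'.species
            · simp [projOff, hie, hi']
            · have e1 : r.1 i = 0 := by
                by_contra h
                apply hi'
                refine G'.complexes_supp (projOff E r.1)
                  (G'.react_mem_fst _ hr') i ?_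
                simpa [projOff, hie] using h
              have e2 : r.2 i = 0 := by
                by_contra h
                apply hi'
                refine G'.complexes_supp (projOff E r.2)
                  (G'.react_mem_snd _ hr') i ?_
                simpa [projOff, hie] using h
              simp [projOff, hie, e1, e2]
        calc ∑ i ∈ G.species, (if i ∈ E then (if i ∈ GE.species then ωE i else 1)
              else (if i ∈ G'.species then ω' i else 1)) * (r.2 i - r.1 i)
            = ∑ i ∈ G.species, ω' i * (projOff E r.2 i - projOff E r.1 i) :=
              Finset.sum_congr rfl fun i _ => key i
          _ = ∑ i ∈ G'.species, ω' i * (projOff E r.2 i - projOff E r.1 i) := by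
              refine sum_move ?_
              intro i hfi
              have hdiff : projOff E r.2 i - projOff E r.1 i ≠ 0 :=
                fun h => hfi (by rw [h, mul_zero])
              have hne : projOff E r.1 i ≠ 0 ∨ projOff E r.2 i ≠ 0 := by
                by_contra h
                push_neg at h
                rw [h.1, h.2] at hdiff
                simp at hdiff
              have hie : i ∉ E := by
                intro hE
                rcases hne with h | h <;> simp [projOff, hE] at h
              constructor
              · rcases hne with h | h
                · simp only [projOff, hie, if_false] at h
                  exact G.complexes_supp r.1 (G.react_mem_fst r hr) i h
                · simp only [projOff, hie, if_false] at h
                  exact G.complexes_supp r.2 (G.react_mem_snd r hr) i h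
              · rcases hne with h | h
                · exact G'.complexes_supp _ (G'.react_mem_fst _ hr') i h
                · exact G'.complexes_supp _ (G'.react_mem_snd _ hr') i h
          _ = 0 := h0
      · have hrE : r ∈ GE.reactions := by
          refine (hGEiff r).2 ⟨hr, ?_, ?_⟩
          · intro i h
            by_contra hie
            exact h (hB i hie).1
          · intro i h
            by_contra hie
            exact h (hB i hie).2
        have h0 := hconsE r hrE
        have key : ∀ i, (if i ∈ E then (if i ∈ GE.species then ωE i else 1)
            else (if i ∈ G'.species then ω' i else 1)) * (r.2 i - r.1 i)
            = ωE i * (r.2 i - r.1 i) := by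
          intro i
          by_cases hie : i ∈ E
          · by_cases hge : i ∈ GE.species
            · simp [hie, hge]
            · have e1 : r.1 i = 0 := by
                by_contra h
                exact hge (GE.complexes_supp r.1 (GE.react_mem_fst r hrE) i h)
              have e2 : r.2 i = 0 := by
                by_contra h
                exact hge (GE.complexes_supp r.2 (GE.react_mem_snd r hrE) i h)
              simp [e1, e2]
          · simp [(hB i hie).1, (hB i hie).2]
        calc ∑ i ∈ G.species, (if i ∈ E then (if i ∈ GE.species then ωE i else 1)
              else (if i ∈ G'.species then ω' i else 1)) * (r.2 i - r.1 i)
            = ∑ i ∈ G.species, ωE i * (r.2 i - r.1 i) :=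
              Finset.sum_congr rfl fun i _ => key i
          _ = ∑ i ∈ GE.species, ωE i * (r.2 i - r.1 i) := by
              refine sum_move ?_
              intro i hfi
              have hdiff : r.2 i - r.1 i ≠ 0 := fun h => hfi (by rw [h, mul_zero])
              have hne : r.1 i ≠ 0 ∨ r.2 i ≠ 0 := by
                by_contra h
                push_neg at h
                rw [h.1, h.2] at hdiff
                simp at hdiff
              constructor
              · rcases hne with h | h
                · exact G.complexes_supp r.1 (G.react_mem_fst r hr) i h
                · exact G.complexes_supp r.2 (G.react_mem_snd r hr) i h
              · rcases hne with h | h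
                · exact GE.complexes_supp r.1 (GE.react_mem_fst r hrE) i h
                · exact GE.complexes_supp r.2 (GE.react_mem_snd r hrE) i h
          _ = 0 := h0
end

section
/- Let G = (S, C, R) be a reaction network with a set of catalysts E ⊆ S, let G* be the reduction of G by removal of E, and let G_E = (S_E, C_E, R_E) be the subnetwork implied by E. If Σ is a minimal siphon of G (a siphon properly containing no other siphon), then exactly one of the following holds: (i) Σ ⊆ S∖E and Σ is a minimal siphon of G*; (ii) Σ ⊆ S_E and Σ is a minimal siphon of G_E; or (iii) Σ = {E₀} for some single species E₀ ∈ E∖S_E. -/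
variable {ι : Type}

section Stmt18

variable {ι : Type} [DecidableEq ι]

/-- Alternative (i): `Σ ⊆ S ∖ E` and `Σ` is a minimal siphon of the reduction `G'`. -/
def AltReduced (G G' : RN ι) (E : Finset ι) (T : Set ι) : Prop :=
  T ⊆ (↑G.species \ ↑E : Set ι) ∧ G'.MinimalSiphon T

/-- Alternative (ii): `Σ ⊆ S_E` and `Σ` is a minimal siphon of the implied
subnetwork `G_E`. -/
def AltSubnetwork (GE : RN ι) (T : Set ι) : Prop :=
  T ⊆ ↑GE.species ∧ GE.MinimalSiphon T

/-- Alternative (iii): `Σ = {e}` for a single catalyst `e ∈ E ∖ S_E`. -/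
def AltSingleton (GE : RN ι) (E : Finset ι) (T : Set ι) : Prop :=
  ∃ e ∈ E, e ∉ GE.species ∧ T = {e}

/-- Lemma 13: if `E` is a set of catalysts of `G`, with implied subnetwork
`GE` and reduction `G'`, and `Σ` is a minimal siphon of `G`, then exactly one
of the following holds: (i) `Σ ⊆ S ∖ E` and `Σ` is a minimal siphon of `G'`;
(ii) `Σ ⊆ S_E` and `Σ` is a minimal siphon of `GE`; (iii) `Σ = {e}` for some
single species `e ∈ E ∖ S_E`. -/
theorem minimal_siphon_trichotomy_of_catalyst_removal
    (G G' GE : RN ι) (E : Finset ι)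
    (hcat : G.IsCatalystSet GE E) (hred : G.IsCatalystReduction E G')
    (T : Set ι) (hmin : G.MinimalSiphon T) :
    (AltReduced G G' E T ∨ AltSubnetwork GE T ∨ AltSingleton GE E T) ∧
    ¬ (AltReduced G G' E T ∧ AltSubnetwork GE T) ∧
    ¬ (AltReduced G G' E T ∧ AltSingleton GE E T) ∧
    ¬ (AltSubnetwork GE T ∧ AltSingleton GE E T) := by
  obtain ⟨⟨hne, hsub, hsiph⟩, hminT⟩ := hmin
  obtain ⟨hEne, hEsub, hC1, hGE, hC2⟩ := hcat
  -- Every species of GE lies in E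
  have hGEsub : ∀ i ∈ GE.species, i ∈ E := by
    intro i hi
    obtain ⟨y, hy, hyi⟩ := GE.species_used i hi
    obtain ⟨r, hr, hry⟩ := GE.complexes_used y hy
    obtain ⟨hrG, h1, h2⟩ := (hGE r).1 hr
    rcases hry with h | h
    · exact h1 i (by rw [h]; exact hyi)
    · exact h2 i (by rw [h]; exact hyi)
  have main : AltReduced G G' E T ∨ AltSubnetwork GE T ∨ AltSingleton GE E T := by
    by_cases hTE : ∃ e ∈ T, e ∈ E
    · obtain ⟨e, heT, heE⟩ := hTE
      -- T ⊆ E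
      have hTsubE : T ⊆ ↑E := by
        have hs : G.IsSiphon (T ∩ ↑E) := by
          refine ⟨⟨e, heT, heE⟩, fun i hi => hsub hi.1, ?_⟩
          rintro r hr ⟨i, ⟨hiT, hiE⟩, hpos⟩
          rcases hC1 r hr with h | h
          · exact ⟨i, ⟨hiT, hiE⟩, by rw [h i hiE]; exact hpos⟩
          · obtain ⟨j, hjT, hjpos⟩ := hsiph r hr ⟨i, hiT, hpos⟩
            have hjE : j ∈ E := by
              by_contra hj
              exact hjpos.ne' (h j hj).1
            exact ⟨j, ⟨hjT, hjE⟩, hjpos⟩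
        have heq := hminT _ hs Set.inter_subset_left
        intro x hx; rw [← heq] at hx; exact hx.2
      by_cases hTS : ∃ e ∈ T, e ∈ GE.species
      · -- (ii) AltSubnetwork
        obtain ⟨f, hfT, hfS⟩ := hTS
        -- key : every G-reaction with a product in T ∩ coerced stuff ...
        have hTsubS : T ⊆ ↑GE.species := by
          have hs : G.IsSiphon (T ∩ ↑GE.species) := by
            refine ⟨⟨f, hfT, hfS⟩, fun i hi => hsub hi.1, ?_⟩
            rintro r hr ⟨i, ⟨hiT, hiS⟩, hpos⟩
            rcases hC1 r hr with h | h
            · exact ⟨i, ⟨hiT, hiS⟩, by rw [h i (hTsubE hiT)]; exact hpos⟩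
            · have hrGE : r ∈ GE.reactions := (hGE r).2 ⟨hr,
                fun j hj => by by_contra hjE; exact hj (h j hjE).1,
                fun j hj => by by_contra hjE; exact hj (h j hjE).2⟩
              obtain ⟨j, hjT, hjpos⟩ := hsiph r hr ⟨i, hiT, hpos⟩
              exact ⟨j, ⟨hjT, GE.complexes_supp r.1 (GE.react_mem_fst r hrGE) j hjpos.ne'⟩, hjpos⟩
          have heq := hminT _ hs Set.inter_subset_left
          intro x hx; rw [← heq] at hx; exact hx.2
        refine Or.inr (Or.inl ⟨hTsubS, ⟨hne, hTsubS, ?_⟩, ?_⟩)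
        · intro r hr hp
          exact hsiph r ((hGE r).1 hr).1 hp
        · -- minimality in GE
          intro T' hT' hT'T
          obtain ⟨hne', hsub', hsiph'⟩ := hT'
          refine hminT T' ⟨hne', hT'T.trans hsub, ?_⟩ hT'T
          rintro r hr ⟨i, hiT', hpos⟩
          rcases hC1 r hr with h | h
          · exact ⟨i, hiT', by rw [h i (hTsubE (hT'T hiT'))]; exact hpos⟩
          · have hrGE : r ∈ GE.reactions := (hGE r).2 ⟨hr,
              fun j hj => by by_contra hjE; exact hj (h j hjE).1,
              fun j hj => by by_contra hjE; exact hj (h j hjE).2⟩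
            exact hsiph' r hrGE ⟨i, hiT', hpos⟩
      · -- (iii) AltSingleton
        push_neg at hTS
        have hs : G.IsSiphon {e} := by
          refine ⟨⟨e, rfl⟩, by intro x hx; rw [hx]; exact hsub heT, ?_⟩
          rintro r hr ⟨i, hi, hpos⟩
          rw [Set.mem_singleton_iff] at hi; subst hi
          rcases hC1 r hr with h | h
          · exact ⟨i, rfl, by rw [h i heE]; exact hpos⟩
          · have hrGE : r ∈ GE.reactions := (hGE r).2 ⟨hr,
              fun j hj => by by_contra hjE; exact hj (h j hjE).1,
              fun j hj => by by_contra hjE; exact hj (h j hjE).2⟩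
            exact absurd (GE.complexes_supp r.2 (GE.react_mem_snd r hrGE) i hpos.ne')
              (hTS i heT)
        have heq := hminT {e} hs (by intro x hx; rw [hx]; exact heT)
        exact Or.inr (Or.inr ⟨e, heE, hTS e heT, heq.symm⟩)
    · -- (i) AltReduced
      push_neg at hTE
      have hTdiff : T ⊆ (↑G.species \ ↑E : Set ι) := fun i hi => ⟨hsub hi, hTE i hi⟩
      have hTsubG' : T ⊆ ↑G'.species := by
        intro i hiT
        have hiE : i ∉ E := hTE i hiT
        obtain ⟨y, hy, hyi⟩ := G.species_used i (hsub hiT)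
        obtain ⟨r, hr, hry⟩ := G.complexes_used y hy
        have hproj : ∀ z : ι → ℝ, z = y → projOff E z i ≠ 0 := by
          intro z hz; simp [projOff, hiE, hz, hyi]
        have hp : (projOff E r.1, projOff E r.2) ∈ G'.reactions := by
          refine (hred _).2 ⟨r, hr, rfl, ?_⟩
          rcases hry with h | h
          · exact Or.inl fun h0 => hproj r.1 h (by rw [h0]; rfl)
          · exact Or.inr fun h0 => hproj r.2 h (by rw [h0]; rfl)
        rcases hry with h | h
        · exact G'.complexes_supp _ (G'.react_mem_fst _ hp) i (hproj r.1 h)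
        · exact G'.complexes_supp _ (G'.react_mem_snd _ hp) i (hproj r.2 h)
      have hsiphG' : G'.IsSiphon T := by
        refine ⟨hne, hTsubG', ?_⟩
        rintro p hp ⟨i, hiT, hpos⟩
        obtain ⟨r, hr, hpe, -⟩ := (hred p).1 hp
        have hiE : i ∉ E := hTE i hiT
        have h2 : 0 < r.2 i := by
          have : p.2 i = r.2 i := by rw [hpe]; simp [projOff, hiE]
          rwa [this] at hpos
        obtain ⟨j, hjT, hjpos⟩ := hsiph r hr ⟨i, hiT, h2⟩
        have hjE : j ∉ E := hTE j hjT
        refine ⟨j, hjT, ?_⟩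
        have : p.1 j = r.1 j := by rw [hpe]; simp [projOff, hjE]
        rwa [this]
      refine Or.inl ⟨hTdiff, hsiphG', ?_⟩
      intro T' hT' hT'T
      obtain ⟨hne', hsub', hsiph'⟩ := hT'
      refine hminT T' ⟨hne', hT'T.trans hsub, ?_⟩ hT'T
      rintro r hr ⟨i, hiT', hpos⟩
      have hiE : i ∉ E := hTE i (hT'T hiT')
      have hp : (projOff E r.1, projOff E r.2) ∈ G'.reactions := by
        refine (hred _).2 ⟨r, hr, rfl, Or.inr fun h0 => ?_⟩
        have : projOff E r.2 i = 0 := by rw [h0]; rfl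
        rw [projOff] at this; simp [hiE] at this
        exact hpos.ne' this
      have h2 : (0:ℝ) < projOff E r.2 i := by simpa [projOff, hiE] using hpos
      obtain ⟨j, hjT', hjpos⟩ := hsiph' _ hp ⟨i, hiT', h2⟩
      have hjE : j ∉ E := hTE j (hT'T hjT')
      refine ⟨j, hjT', ?_⟩
      simpa [projOff, hjE] using hjpos
  refine ⟨main, ?_, ?_, ?_⟩
  · rintro ⟨⟨hT1, -⟩, hT2, ⟨⟨hne2, -, -⟩, -⟩⟩
    obtain ⟨x, hx⟩ := hne2
    exact (hT1 hx).2 (hGEsub x (hT2 hx))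
  · rintro ⟨⟨hT1, -⟩, e, heE, -, hTe⟩
    have : e ∈ T := by rw [hTe]; rfl
    exact (hT1 this).2 heE
  · rintro ⟨⟨hT2, -⟩, e, -, heS, hTe⟩
    have : e ∈ T := by rw [hTe]; rfl
    exact heS (hT2 this)

end Stmt18
end

section
/- Let G = (S, C, R) be a reaction network and Σ ⊆ S a nonempty subset of species. Then Σ is drainable if and only if it is DG-drainable, and Σ is self-replicable if and only if it is DG-self-replicable. Here, a G-reaction pathway is a sequence y(0), y(1), …, y(k) ∈ ℝ≥0ⁿ such that for each j ∈ {1,…,k} there exist a reaction y_j → y_j' ∈ R and a vector w_j ∈ ℝ≥0ⁿ with y(j−1) = y_j + w_j and y(j) = y_j' + w_j; Σ is DG-drainable (resp. DG-self-replicable) if there is a G-reaction pathway with the i-th coordinate of y(k) − y(0) strictly negative (resp. strictly positive) for every i with S_i ∈ Σ. -/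
variable {ι : Type}

/-- A `G`-reaction pathway of length `k`: a sequence `y 0, …, y k` of
nonnegative vectors such that consecutive terms differ by firing one reaction,
i.e. `y j = yⱼ + wⱼ` and `y (j+1) = yⱼ' + wⱼ` for some reaction `yⱼ → yⱼ'` of
`G` and some nonnegative vector `wⱼ`. -/
def DGPathway {ι : Type} (G : RN ι) (k : ℕ) (y : ℕ → ι → ℝ) : Prop :=
  (∀ j ≤ k, ∀ i, 0 ≤ y j i) ∧
  ∀ j < k, ∃ r ∈ G.reactions, ∃ w : ι → ℝ, (∀ i, 0 ≤ w i) ∧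
    y j = r.1 + w ∧ y (j + 1) = r.2 + w


namespace RN

variable {ι : Type} (G : RN ι)

theorem sum_map_fst_nonneg {L : List ((ι → ℝ) × (ι → ℝ))} (hL : ∀ r ∈ L, r ∈ G.reactions) :
    0 ≤ (L.map Prod.fst).sum :=
  List.sum_nonneg fun _ hx => by
    obtain ⟨r, hr, rfl⟩ := List.mem_map.1 hx
    exact G.complexes_nonneg _ (G.react_mem_fst r (hL r hr))

theorem sum_map_snd_nonneg {L : List ((ι → ℝ) × (ι → ℝ))} (hL : ∀ r ∈ L, r ∈ G.reactions) :
    0 ≤ (L.map Prod.snd).sum :=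
  List.sum_nonneg fun _ hx => by
    obtain ⟨r, hr, rfl⟩ := List.mem_map.1 hx
    exact G.complexes_nonneg _ (G.react_mem_snd r (hL r hr))

end RN

theorem List.sum_map_snd_sub_sum_map_fst_apply {ι : Type} (L : List ((ι → ℝ) × (ι → ℝ)))
    (i : ι) :
    (L.map Prod.snd).sum i - (L.map Prod.fst).sum i = (L.map fun r => r.2 i - r.1 i).sum := by
  induction L with
  | nil => simp
  | cons r L ih => simp only [List.map_cons, List.sum_cons, Pi.add_apply, ← ih]; ring

namespace DGPathway

variable {ι : Type} {G : RN ι} {k : ℕ} {y : ℕ → ι → ℝ}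

theorem of_succ (h : DGPathway G (k + 1) y) : DGPathway G k y :=
  ⟨fun j hj => h.1 j (by omega), fun j hj => h.2 j (by omega)⟩

theorem exists_list (h : DGPathway G k y) :
    ∃ L : List ((ι → ℝ) × (ι → ℝ)), (∀ r ∈ L, r ∈ G.reactions) ∧
      ∀ i, (L.map fun r => r.2 i - r.1 i).sum = y k i - y 0 i := by
  induction k with
  | zero => exact ⟨[], by simp, by simp⟩
  | succ k ih =>
    obtain ⟨L, hL, hsum⟩ := ih h.of_succ
    obtain ⟨r, hr, w, -, hpre, hpost⟩ := h.2 k (Nat.lt_succ_self k)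
    have hmem : ∀ p ∈ L ++ [r], p ∈ G.reactions := fun p hp =>
      (List.mem_append.1 hp).elim (hL p) fun hp => List.mem_singleton.1 hp ▸ hr
    refine ⟨L ++ [r], hmem, fun i => ?_⟩
    have hstep : r.2 i - r.1 i = y (k + 1) i - y k i := by
      simp [hpre, hpost]
    simp only [List.map_append, List.sum_append, List.map_singleton, List.sum_singleton,
      hsum, hstep]
    ring

end DGPathway

section ListPathway

variable {ι : Type}

/-- The state after firing the first `j` reactions of `L`: their products, plus the
reactants of the reactions still to come. -/
def listPathway (L : List ((ι → ℝ) × (ι → ℝ))) (j : ℕ) : ι → ℝ :=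
  ((L.take j).map Prod.snd).sum + ((L.drop j).map Prod.fst).sum

theorem dgPathway_listPathway (G : RN ι) {L : List ((ι → ℝ) × (ι → ℝ))}
    (hL : ∀ r ∈ L, r ∈ G.reactions) : DGPathway G L.length (listPathway L) := by
  have hnonneg (j j' : ℕ) :
      0 ≤ ((L.take j).map Prod.snd).sum + ((L.drop j').map Prod.fst).sum :=
    add_nonneg (G.sum_map_snd_nonneg fun r hr => hL r (List.mem_of_mem_take hr))
      (G.sum_map_fst_nonneg fun r hr => hL r (List.mem_of_mem_drop hr))
  refine ⟨fun j _ => hnonneg j j, fun j hj => ⟨L[j], hL _ (List.getElem_mem hj),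
    ((L.take j).map Prod.snd).sum + ((L.drop (j + 1)).map Prod.fst).sum,
    hnonneg j (j + 1), ?_, ?_⟩⟩
  · rw [listPathway, List.drop_eq_getElem_cons hj, List.map_cons, List.sum_cons]
    abel
  · rw [listPathway, List.take_succ_eq_append_getElem hj, List.map_append, List.sum_append,
      List.map_singleton, List.sum_singleton]
    abel

theorem listPathway_length_sub_zero (L : List ((ι → ℝ) × (ι → ℝ))) (i : ι) :
    listPathway L L.length i - listPathway L 0 i = (L.map fun r => r.2 i - r.1 i).sum := by
  simpa [listPathway] using L.sum_map_snd_sub_sum_map_fst_apply i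

end ListPathway

theorem RN.exists_list_iff_exists_dgPathway {ι : Type} (G : RN ι) (P : (ι → ℝ) → Prop) :
    (∃ L : List ((ι → ℝ) × (ι → ℝ)), (∀ r ∈ L, r ∈ G.reactions) ∧
      P fun i => (L.map fun r => r.2 i - r.1 i).sum) ↔
    ∃ (k : ℕ) (y : ℕ → ι → ℝ), DGPathway G k y ∧ P (y k - y 0) := by
  constructor
  · rintro ⟨L, hL, hP⟩
    refine ⟨L.length, listPathway L, dgPathway_listPathway G hL, ?_⟩
    convert hP using 2 with i
    exact listPathway_length_sub_zero L i
  · rintro ⟨k, y, hy, hP⟩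
    obtain ⟨L, hL, hsum⟩ := hy.exists_list
    exact ⟨L, hL, by convert hP using 2 with i; exact hsum i⟩

/-- Proposition 7: a nonempty set of species `Σ` is drainable (respectively,
self-replicable) if and only if it is DG-drainable (respectively,
DG-self-replicable): some `G`-reaction pathway strictly decreases
(respectively, increases) every coordinate of `Σ`. -/
theorem drainable_selfReplicable_iff_DG {ι : Type} (G : RN ι)
    (T : Set ι) (hT : T.Nonempty) (hTS : T ⊆ ↑G.species) :
    (G.Drainable T ↔
      ∃ (k : ℕ) (y : ℕ → ι → ℝ), DGPathway G k y ∧ ∀ i ∈ T, y k i - y 0 i < 0) ∧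
    (G.SelfReplicable T ↔
      ∃ (k : ℕ) (y : ℕ → ι → ℝ), DGPathway G k y ∧ ∀ i ∈ T, 0 < y k i - y 0 i) := by
  simp only [RN.Drainable, RN.SelfReplicable, hT, hTS, true_and]
  exact ⟨G.exists_list_iff_exists_dgPathway fun d => ∀ i ∈ T, d i < 0,
    G.exists_list_iff_exists_dgPathway fun d => ∀ i ∈ T, 0 < d i⟩
end
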